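/- Let x lie in the open unit disk of ℝ² and v ∈ ℝ², v ≠ 0, and write x_b = x_b(x,v), t_b = t_b(x,v). Then the vectors x_b/(v·x_b) (which equals ∇_x t_b) and t_b·x_b/(v·x_b) (whose negative equals ∇_v t_b) satisfy the bounds |x_b/(v·x_b)| = 1/|v·x_b| and |t_b·x_b/(v·x_b)| ≤ 2/|v|². -/

import Mathlib

noncomputable section

open Matrix Real Set

/-- The Euclidean plane ℝ². -/
abbrev E : Type := EuclideanSpace ℝ (Fin 2)

/-- Dot product on ℝ². -/
def dot (a b : E) : ℝ := a 0 * b 0 + a 1 * b 1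

/-- Build a vector of ℝ² from its components. -/
def toE (f : Fin 2 → ℝ) : E := (WithLp.equiv 2 (Fin 2 → ℝ)).symm f

/-- Tensor (outer) product a⊗b, (a⊗b)_{ij} = aᵢ bⱼ. -/
def outer (a b : E) : Matrix (Fin 2) (Fin 2) ℝ := Matrix.of fun i j => a i * b j

/-- Matrix acting on a column vector. -/
def mulV (M : Matrix (Fin 2) (Fin 2) ℝ) (v : E) : E := toE fun i => M i 0 * v 0 + M i 1 * v 1

/-- Row vector multiplied by a matrix on the right. -/
def vMulM (w : E) (M : Matrix (Fin 2) (Fin 2) ℝ) : E := toE fun j => w 0 * M 0 j + w 1 * M 1 j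

/-- Specular reflection matrix R_n = I - 2 n⊗n. -/
def Rmat (n : E) : Matrix (Fin 2) (Fin 2) ℝ := 1 - (2 : ℝ) • outer n n

/-- The matrix A_{v,n} = ((v·n) I + n⊗v)(I - (v⊗n)/(v·n)). -/
def Amat (v n : E) : Matrix (Fin 2) (Fin 2) ℝ :=
  (dot v n • (1 : Matrix (Fin 2) (Fin 2) ℝ) + outer n v) *
    (1 - (dot v n)⁻¹ • outer v n)

/-- Counterclockwise rotation by π/2. -/
def Qmat : Matrix (Fin 2) (Fin 2) ℝ := !![0, -1; 1, 0]

/-- Backward exit time from the closed unit disk. -/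
def tb (x v : E) : ℝ := sSup {s : ℝ | 0 ≤ s ∧ ‖x - s • v‖ ≤ 1}

/-- Backward exit point from the closed unit disk. -/
def xb (x v : E) : E := x - tb x v • v

/-- The i-th column of a 2×2 matrix, as a vector of ℝ². -/
def colE (M : Matrix (Fin 2) (Fin 2) ℝ) (i : Fin 2) : E := toE fun k => M k i

/-- A 2×2 matrix as a continuous linear map ℝ² → ℝ². -/
def toCLM (M : Matrix (Fin 2) (Fin 2) ℝ) : E →L[ℝ] E :=
  LinearMap.toContinuousLinearMap (Matrix.toEuclideanLin M)

/-!
The exit point `x_b` lies on the unit circle, because the exit time is the largest time at which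
the backward ray is still in the closed disk; this gives the first identity. Writing `t = t_b`,
expanding `|x - t v|² = 1` yields `t (t|v|² - 2 x·v) = 1 - |x|² > 0`, so `t > 0` and
`v·x_b = x·v - t|v|² < -t|v|²/2`, which is the second bound.
-/

open RealInnerProductSpace

lemma dot_eq_inner (a b : E) : dot a b = ⟪a, b⟫ := by
  simp [dot, PiLp.inner_apply, Fin.sum_univ_two, mul_comm]

section NormedSpace

variable {F : Type*} [NormedAddCommGroup F] [NormedSpace ℝ F] {x v : F}

lemma bddAbove_exitTimes (hv : v ≠ 0) : BddAbove {s : ℝ | 0 ≤ s ∧ ‖x - s • v‖ ≤ 1} := by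
  refine ⟨(‖x‖ + 1) / ‖v‖, fun s ⟨hs, hsx⟩ => ?_⟩
  rw [le_div_iff₀ (norm_pos_iff.mpr hv)]
  calc s * ‖v‖ = ‖x - (x - s • v)‖ := by rw [sub_sub_cancel, norm_smul, Real.norm_of_nonneg hs]
    _ ≤ ‖x‖ + ‖x - s • v‖ := norm_sub_le _ _
    _ ≤ ‖x‖ + 1 := by gcongr

lemma isClosed_exitTimes : IsClosed {s : ℝ | 0 ≤ s ∧ ‖x - s • v‖ ≤ 1} :=
  isClosed_Ici.inter (isClosed_le (f := fun s : ℝ => ‖x - s • v‖) (by fun_prop) continuous_const)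

end NormedSpace

section ExitTime

variable {x v : E}

lemma tb_mem_exitTimes (hx : ‖x‖ ≤ 1) (hv : v ≠ 0) :
    0 ≤ tb x v ∧ ‖x - tb x v • v‖ ≤ 1 :=
  isClosed_exitTimes.csSup_mem ⟨0, le_rfl, by simpa using hx⟩ (bddAbove_exitTimes hv)

lemma lt_tb_of_norm_sub_smul_lt_one {s : ℝ} (hs : 0 ≤ s) (hsx : ‖x - s • v‖ < 1) (hv : v ≠ 0) :
    s < tb x v := by
  have hv' : 0 < ‖v‖ := norm_pos_iff.mpr hv
  set ε := (1 - ‖x - s • v‖) / ‖v‖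
  have hε : 0 < ε := div_pos (by linarith) hv'
  have hmem : ‖x - (s + ε) • v‖ ≤ 1 :=
    calc ‖x - (s + ε) • v‖ = ‖(x - s • v) - ε • v‖ := by rw [add_smul, sub_sub]
      _ ≤ ‖x - s • v‖ + ‖ε • v‖ := norm_sub_le _ _
      _ = 1 := by rw [norm_smul, Real.norm_of_nonneg hε.le, div_mul_cancel₀ _ hv'.ne']; ring
  exact (lt_add_of_pos_right s hε).trans_le (le_csSup (bddAbove_exitTimes hv) ⟨by linarith, hmem⟩)

lemma norm_xb (hx : ‖x‖ ≤ 1) (hv : v ≠ 0) : ‖xb x v‖ = 1 := by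
  obtain ⟨ht, hle⟩ := tb_mem_exitTimes hx hv
  exact hle.eq_or_lt.resolve_right fun hlt => (lt_tb_of_norm_sub_smul_lt_one ht hlt hv).false

end ExitTime

section InnerProductSpace

variable {F : Type*} [NormedAddCommGroup F] [InnerProductSpace ℝ F] {x v : F} {t : ℝ}

lemma two_inner_lt_of_norm_sub_smul_eq_one (hx : ‖x‖ < 1) (ht : 0 ≤ t)
    (h : ‖x - t • v‖ = 1) : 0 < t ∧ 2 * ⟪x, v⟫ < t * ‖v‖ ^ 2 := by
  have hexp := norm_sub_sq_real x (t • v)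
  rw [h, real_inner_smul_right, norm_smul, Real.norm_of_nonneg ht] at hexp
  have hx2 : ‖x‖ ^ 2 < 1 := by nlinarith [norm_nonneg x]
  have ht0 : 0 < t := ht.lt_of_ne fun h0 => by subst h0; simp at hexp; linarith
  exact ⟨ht0, by nlinarith⟩

lemma div_abs_inner_sub_smul_le (hx : ‖x‖ < 1) (ht : 0 ≤ t) (h : ‖x - t • v‖ = 1) :
    t / |⟪v, x - t • v⟫| ≤ 2 / ‖v‖ ^ 2 := by
  obtain ⟨ht0, hlt⟩ := two_inner_lt_of_norm_sub_smul_eq_one hx ht h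
  have hinner : ⟪v, x - t • v⟫ = ⟪x, v⟫ - t * ‖v‖ ^ 2 := by
    rw [inner_sub_right, real_inner_smul_right, real_inner_self_eq_norm_sq, real_inner_comm]
  have hv : 0 < ‖v‖ ^ 2 := by
    have : v ≠ 0 := by rintro rfl; simp at hlt
    positivity
  rw [hinner, abs_of_neg (by nlinarith), div_le_div_iff₀ (by nlinarith) hv]
  nlinarith

end InnerProductSpace

/-- bounds for x_b/(v·x_b) and t_b·x_b/(v·x_b). -/
theorem stmt16 (x v : E) (hx : ‖x‖ < 1) (hv : v ≠ 0) :
    ‖(dot v (xb x v))⁻¹ • xb x v‖ = 1 / |dot v (xb x v)| ∧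
    ‖tb x v • ((dot v (xb x v))⁻¹ • xb x v)‖ ≤ 2 / ‖v‖ ^ 2 := by
  have hxb := norm_xb hx.le hv
  have ht := (tb_mem_exitTimes hx.le hv).1
  rw [dot_eq_inner]
  constructor
  · rw [norm_smul, hxb, norm_inv, Real.norm_eq_abs, mul_one, one_div]
  · rw [norm_smul, norm_smul, hxb, norm_inv, Real.norm_eq_abs, Real.norm_eq_abs,
      abs_of_nonneg ht, mul_one, ← div_eq_mul_inv]
    exact div_abs_inner_sub_smul_le hx ht hxb
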